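/- arXiv:1902.10804 — 3 statements merged into one kernel-verified Lean document; each statement's English description precedes it below -/
import Mathlib

section
/- Let φ : A* → M be a monoid homomorphism into a finite monoid M. If (x₀, a, x₁) is a good factorization with respect to φ, x₀' is a suffix of x₀ (i.e., x₀ = s·x₀' for some s ∈ A*), and x₁' is a prefix of x₁ (i.e., x₁ = x₁'·t for some t ∈ A*), then (x₀', a, x₁') is also a good factorization with respect to φ. -/
/-- Green `R`-quasi-order on a monoid: `s ≤_R t` iff `s ∈ tM`. -/
def RLe {M : Type*} [Monoid M] (s t : M) : Prop := ∃ x, s = t * x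

/-- Strict Green `R`-order. -/
def RLt {M : Type*} [Monoid M] (s t : M) : Prop := RLe s t ∧ ¬ RLe t s

/-- Green `L`-quasi-order on a monoid: `s ≤_L t` iff `s ∈ Mt`. -/
def LLe {M : Type*} [Monoid M] (s t : M) : Prop := ∃ x, s = x * t

/-- Strict Green `L`-order. -/
def LLt {M : Type*} [Monoid M] (s t : M) : Prop := LLe s t ∧ ¬ LLe t s

/-- `(x₀, a, x₁)` is a good factorization with respect to `φ`:
`φ(x₀a) <_R φ(x₀)` and `φ(ax₁) <_L φ(x₁)`. -/
def GoodFact {A M : Type*} [Monoid M] (φ : FreeMonoid A →* M)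
    (x₀ : FreeMonoid A) (a : A) (x₁ : FreeMonoid A) : Prop :=
  RLt (φ (x₀ * FreeMonoid.of a)) (φ x₀) ∧ LLt (φ (FreeMonoid.of a * x₁)) (φ x₁)

/-- `(x₀, a, x₁)` is a good factorization of the word `w` with respect to `φ`. -/
def GoodFactOf {A M : Type*} [Monoid M] (φ : FreeMonoid A →* M)
    (w x₀ : FreeMonoid A) (a : A) (x₁ : FreeMonoid A) : Prop :=
  w = x₀ * FreeMonoid.of a * x₁ ∧ GoodFact φ x₀ a x₁

/-! `≤_R` is stable under left multiplication and `≤_L` under right multiplication, so a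
witness of `φ x₀' ≤_R φ (x₀' a)` multiplied on the left by `φ s` would give `φ x₀ ≤_R φ (x₀ a)`;
dually on the `L` side. -/

section GreenOrder

variable {M : Type*} [Monoid M]

theorem RLe.mul_left {s t : M} (h : RLe s t) (u : M) : RLe (u * s) (u * t) := by
  obtain ⟨x, rfl⟩ := h
  exact ⟨x, (mul_assoc u t x).symm⟩

theorem LLe.mul_right {s t : M} (h : LLe s t) (u : M) : LLe (s * u) (t * u) := by
  obtain ⟨x, rfl⟩ := h
  exact ⟨x, mul_assoc x t u⟩

theorem rLe_mul_right (t x : M) : RLe (t * x) t := ⟨x, rfl⟩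

theorem lLe_mul_left (t x : M) : LLe (x * t) t := ⟨x, rfl⟩

theorem RLt.of_mul_left {t x u : M} (h : RLt (u * (t * x)) (u * t)) : RLt (t * x) t :=
  ⟨rLe_mul_right t x, fun hle => h.2 (hle.mul_left u)⟩

theorem LLt.of_mul_right {t x u : M} (h : LLt (x * (t * u)) (t * u)) : LLt (x * t) t :=
  ⟨lLe_mul_left t x, fun hle => h.2 (mul_assoc x t u ▸ hle.mul_right u)⟩

end GreenOrder

theorem goodFact_shorten_general {A M : Type*} [Monoid M] (φ : FreeMonoid A →* M)
    (x₀ x₁ x₀' x₁' s t : FreeMonoid A) (a : A)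
    (h : GoodFact φ x₀ a x₁) (hs : x₀ = s * x₀') (ht : x₁ = x₁' * t) :
    GoodFact φ x₀' a x₁' := by
  subst hs ht
  simp only [GoodFact, map_mul, mul_assoc] at h ⊢
  exact ⟨RLt.of_mul_left h.1, LLt.of_mul_right h.2⟩

theorem goodFact_shorten {A M : Type*} [Monoid M] [Finite M] (φ : FreeMonoid A →* M)
    (x₀ x₁ x₀' x₁' s t : FreeMonoid A) (a : A)
    (h : GoodFact φ x₀ a x₁) (hs : x₀ = s * x₀') (ht : x₁ = x₁' * t) :
    GoodFact φ x₀' a x₁' :=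
  goodFact_shorten_general φ x₀ x₁ x₀' x₁' s t a h hs ht
end

section
/- Let S be a semigroup and let s, t ∈ S be regular elements, say s = s·x·s and t = t·y·t for some x, y ∈ S. If the product (x·s)·(t·y) is itself a regular element of S (i.e., there exists z ∈ S with x s t y = x s t y · z · x s t y), then the product s·t is regular in S. -/
theorem regular_product {S : Type*} [Semigroup S] (s t x y : S)
    (hs : s = s * x * s) (ht : t = t * y * t)
    (h : ∃ z, x * s * t * y = x * s * t * y * z * (x * s * t * y)) :
    ∃ v, s * t = s * t * v * (s * t) := by
  obtain ⟨z, hz⟩ := h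
  have hst : s * t = s * (x * s * t * y) * t := by
    calc s * t = (s * x * s) * (t * y * t) := by rw [← hs, ← ht]
      _ = s * (x * s * t * y) * t := by simp only [mul_assoc]
  refine ⟨y * z * x, ?_⟩
  calc s * t = s * (x * s * t * y * z * (x * s * t * y)) * t := by rw [← hz, ← hst]
    _ = (s * x * s) * (t * y) * z * (x * s) * (t * y * t) := by simp only [mul_assoc]
    _ = s * t * (y * z * x) * (s * t) := by rw [← hs, ← ht]; simp only [mul_assoc]
end

section
/- Let S be a semigroup and let π, ρ, x, y ∈ S satisfy: π = π·x·π, ρ = ρ·y·ρ, x·π = y·ρ, and π·x = ρ·x·π·x. Then ρ = π. -/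
theorem locality_core {S : Type*} [Semigroup S] (π ρ x y : S)
    (h1 : π = π * x * π) (h2 : ρ = ρ * y * ρ)
    (h3 : x * π = y * ρ) (h4 : π * x = ρ * x * π * x) :
    ρ = π :=
  calc ρ = ρ * (y * ρ) := by rw [← mul_assoc, ← h2]
    _ = ρ * x * (π * x * π) := by rw [← h3, ← h1, mul_assoc]
    _ = ρ * x * π * x * π := by simp only [mul_assoc]
    _ = π := by rw [← h4, ← h1]
end
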